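/- For all real numbers r1, r2 ≥ 0 with (r1, r2) ≠ (0, 0), one has 2 · Re ∫₀^∞ (1 + 16 t²)^{−1/2} · exp(−(1/√2)·(r1·√(1 + 4it) + r2·√(1 − 4it))) dt = K₀(√(r1² + r2²)), where the complex square roots are principal-branch square roots. -/

import Mathlib

open MeasureTheory

noncomputable section

/-- The modified Bessel function of the second kind `K₀`, via its integral representation
`K₀(z) = ∫₁^∞ e^{−zt} (t² − 1)^{−1/2} dt`. -/
def K0 (z : ℝ) : ℝ := ∫ t in Set.Ioi (1:ℝ), Real.exp (-z*t) / Real.sqrt (t^2 - 1)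

/-- Principal-branch complex square root. -/
def csqrt (z : ℂ) : ℂ := z ^ ((1:ℂ)/2)

/-!
The substitution `t = sinh (2ξ) / 4` turns `√(1 ± 4it)` into `cosh ξ ± i sinh ξ` and
`(1 + 16t²)^{-1/2} dt` into `dξ / 2`, so the left-hand side becomes
`∫₀^∞ e^{-a cosh ξ} cos (b sinh ξ) dξ` with `a = (r₁ + r₂)/√2`, `b = (r₂ - r₁)/√2`.
Write `a + ib = c e^{iβ}` with `c = √(r₁² + r₂²)` and `|β| < π/2`; then
`a cosh ξ + ib sinh ξ = c cosh (ξ + iβ)`. The integral of `e^{-c cosh z}` over the line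
`ℝ + iy` does not depend on `y ∈ (-π/2, π/2)`: its `y`-derivative is `i` times the integral of
an `x`-derivative of an integrable function, hence zero. At `y = 0` it equals
`2 ∫₀^∞ e^{-c cosh ξ} dξ`, which is `2 K₀(c)` after substituting `t = cosh ξ`.
-/

open Set Filter

namespace Real

lemma sq_le_four_mul_cosh (x : ℝ) : x ^ 2 ≤ 4 * cosh x := by
  have h := quadratic_le_exp_of_nonneg (abs_nonneg x)
  rw [← cosh_abs, cosh_eq]
  nlinarith [exp_pos (-|x|), abs_nonneg x, sq_abs x]

lemma integrable_cosh_mul_exp_neg_mul_cosh {k : ℝ} (hk : 0 < k) :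
    Integrable fun x => cosh x * exp (-k * cosh x) := by
  refine ((integrable_exp_neg_mul_sq (b := k / 8) (by positivity)).const_mul (2 / k)).mono'
    (by fun_prop) (ae_of_all _ fun x => ?_)
  have hlin : k / 2 * cosh x ≤ exp (k / 2 * cosh x) := by
    linarith [add_one_le_exp (k / 2 * cosh x)]
  have hsq : -(k / 2) * cosh x ≤ -(k / 8) * x ^ 2 := by nlinarith [sq_le_four_mul_cosh x]
  rw [norm_of_nonneg (by positivity)]
  calc cosh x * exp (-k * cosh x)
      = 2 / k * (k / 2 * cosh x) * exp (-(k / 2) * cosh x) * exp (-(k / 2) * cosh x) := by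
        rw [mul_assoc _ (exp _), ← exp_add]; field_simp; ring_nf
    _ ≤ 2 / k * exp (k / 2 * cosh x) * exp (-(k / 2) * cosh x) * exp (-(k / 8) * x ^ 2) := by
        gcongr
    _ = 2 / k * exp (-(k / 8) * x ^ 2) := by
        rw [mul_assoc (2 / k), ← exp_add]; ring_nf; simp

lemma integrable_exp_neg_mul_cosh {k : ℝ} (hk : 0 < k) :
    Integrable fun x => exp (-k * cosh x) :=
  (integrable_cosh_mul_exp_neg_mul_cosh hk).mono' (by fun_prop) (ae_of_all _ fun x => by
    rw [norm_of_nonneg (exp_pos _).le]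
    exact le_mul_of_one_le_left (exp_pos _).le (one_le_cosh x))

lemma cosh_image_Ioi_zero : cosh '' Ioi 0 = Ioi 1 := by
  refine Subset.antisymm ?_ fun y (hy : 1 < y) => ⟨arcosh y, arcosh_pos hy, cosh_arcosh hy.le⟩
  rintro _ ⟨x, hx, rfl⟩
  exact one_lt_cosh.2 hx.ne'

end Real

open Real in
lemma K0_eq_integral_exp_neg_mul_cosh (z : ℝ) : K0 z = ∫ ξ in Ioi 0, exp (-z * cosh ξ) := by
  rw [K0, ← cosh_image_Ioi_zero, integral_image_eq_integral_deriv_smul_of_monotoneOn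
    measurableSet_Ioi (fun x _ => (hasDerivAt_cosh x).hasDerivWithinAt)
    (cosh_strictMonoOn.monotoneOn.mono Ioi_subset_Ici_self)]
  refine setIntegral_congr_fun measurableSet_Ioi fun x (hx : 0 < x) => ?_
  rw [smul_eq_mul, ← sinh_sq, sqrt_sq (sinh_pos_iff.2 hx).le]
  field_simp

namespace Complex

lemma norm_sinh_le_cosh_re (z : ℂ) : ‖sinh z‖ ≤ Real.cosh z.re := by
  have := norm_sub_le (exp z) (exp (-z))
  rw [norm_exp, norm_exp, neg_re] at this
  rw [sinh, Real.cosh_eq, norm_div, RCLike.norm_ofNat]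
  gcongr

lemma hasDerivAt_exp_neg_mul_cosh (c z : ℂ) :
    HasDerivAt (fun w => exp (-c * cosh w)) (exp (-c * cosh z) * (-c * sinh z)) z :=
  ((hasDerivAt_cosh z).const_mul (-c)).cexp

end Complex

section ContourShift

open Complex
open scoped Real

lemma cexp_neg_mul_cosh_add_mul_I (c x y : ℝ) :
    cexp (-c * cosh (x + y * I)) = Real.exp (-(c * Real.cos y) * Real.cosh x) *
      cexp ((-(c * Real.sin y) * Real.sinh x : ℝ) * I) := by
  push_cast
  rw [← exp_add, cosh_add, cosh_mul_I, sinh_mul_I]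
  ring_nf

lemma norm_cexp_neg_mul_cosh_add_mul_I (c x y : ℝ) :
    ‖cexp (-c * cosh (x + y * I))‖ = Real.exp (-(c * Real.cos y) * Real.cosh x) := by
  rw [cexp_neg_mul_cosh_add_mul_I, norm_mul, norm_exp_ofReal_mul_I, mul_one, norm_real,
    Real.norm_of_nonneg (Real.exp_pos _).le]

lemma re_cexp_neg_mul_cosh_add_mul_I (c x y : ℝ) :
    (cexp (-c * cosh (x + y * I))).re =
      Real.exp (-(c * Real.cos y) * Real.cosh x) * Real.cos (c * Real.sin y * Real.sinh x) := by
  rw [cexp_neg_mul_cosh_add_mul_I, re_ofReal_mul, exp_ofReal_mul_I_re, neg_mul (c * Real.sin y),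
    Real.cos_neg]

variable {c : ℝ}

lemma norm_cexp_neg_mul_cosh_le (hc : 0 ≤ c) {B : ℝ} (hB : B ≤ π) (x : ℝ) {y : ℝ}
    (hy : |y| ≤ B) :
    ‖cexp (-c * cosh (x + y * I))‖ ≤ Real.exp (-(c * Real.cos B) * Real.cosh x) := by
  have hcos : Real.cos B ≤ Real.cos y := by
    rw [← Real.cos_abs y]
    exact Real.cos_le_cos_of_nonneg_of_le_pi (abs_nonneg y) hB hy
  rw [norm_cexp_neg_mul_cosh_add_mul_I]
  gcongr

lemma norm_cexp_neg_mul_cosh_mul_sinh_le (hc : 0 ≤ c) {B : ℝ} (hB : B ≤ π) (x : ℝ) {y : ℝ}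
    (hy : |y| ≤ B) :
    ‖cexp (-c * cosh (x + y * I)) * (-c * sinh (x + y * I))‖ ≤
      c * (Real.cosh x * Real.exp (-(c * Real.cos B) * Real.cosh x)) := by
  have hsinh : ‖sinh (x + y * I)‖ ≤ Real.cosh x := by
    simpa using norm_sinh_le_cosh_re (x + y * I)
  rw [norm_mul, norm_mul, norm_neg, norm_real, Real.norm_of_nonneg hc]
  calc _ ≤ Real.exp (-(c * Real.cos B) * Real.cosh x) * (c * Real.cosh x) := by
        gcongr
        exact norm_cexp_neg_mul_cosh_le hc hB x hy
    _ = _ := by ring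

lemma integrable_cexp_neg_mul_cosh_add_mul_I (hc : 0 < c) {y : ℝ} (hy : |y| < π / 2) :
    Integrable fun x : ℝ => cexp (-c * cosh (x + y * I)) := by
  have hk : 0 < c * Real.cos |y| :=
    mul_pos hc (Real.cos_pos_of_mem_Ioo ⟨by linarith [abs_nonneg y], hy⟩)
  exact (Real.integrable_exp_neg_mul_cosh hk).mono' (by fun_prop) (ae_of_all _ fun x =>
    norm_cexp_neg_mul_cosh_le hc.le (by linarith [Real.pi_pos]) x le_rfl)

lemma integrable_cexp_neg_mul_cosh_mul_sinh (hc : 0 < c) {y : ℝ} (hy : |y| < π / 2) :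
    Integrable fun x : ℝ => cexp (-c * cosh (x + y * I)) * (-c * sinh (x + y * I)) := by
  have hk : 0 < c * Real.cos |y| :=
    mul_pos hc (Real.cos_pos_of_mem_Ioo ⟨by linarith [abs_nonneg y], hy⟩)
  exact ((Real.integrable_cosh_mul_exp_neg_mul_cosh hk).const_mul c).mono' (by fun_prop)
    (ae_of_all _ fun x =>
      norm_cexp_neg_mul_cosh_mul_sinh_le hc.le (by linarith [Real.pi_pos]) x le_rfl)

lemma integral_cexp_neg_mul_cosh_mul_sinh_eq_zero (hc : 0 < c) {y : ℝ} (hy : |y| < π / 2) :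
    ∫ x : ℝ, cexp (-c * cosh (x + y * I)) * (-c * sinh (x + y * I)) = 0 :=
  integral_eq_zero_of_hasDerivAt_of_integrable
    (fun x => ((hasDerivAt_exp_neg_mul_cosh c _).comp_add_const (x : ℂ) (y * I)).comp_ofReal)
    (integrable_cexp_neg_mul_cosh_mul_sinh hc hy) (integrable_cexp_neg_mul_cosh_add_mul_I hc hy)

lemma hasDerivAt_integral_cexp_neg_mul_cosh_add_mul_I (hc : 0 < c) {y : ℝ} (hy : |y| < π / 2) :
    HasDerivAt (fun b : ℝ => ∫ x : ℝ, cexp (-c * cosh (x + b * I))) 0 y := by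
  set B := (|y| + π / 2) / 2 with hBdef
  have hyB : |y| < B := by linarith
  have hB : B < π / 2 := by linarith
  have hk : 0 < c * Real.cos B :=
    mul_pos hc (Real.cos_pos_of_mem_Ioo ⟨by linarith [abs_nonneg y], hB⟩)
  have hderiv := hasDerivAt_integral_of_dominated_loc_of_deriv_le
    (F' := fun b x : ℝ => cexp (-c * cosh (x + b * I)) * (-c * sinh (x + b * I)) * I)
    (bound := fun x => c * (Real.cosh x * Real.exp (-(c * Real.cos B) * Real.cosh x)))
    (Metric.isOpen_ball.mem_nhds (mem_ball_zero_iff.2 (by simpa using hyB)))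
    (Eventually.of_forall fun b => by fun_prop)
    (integrable_cexp_neg_mul_cosh_add_mul_I hc hy) (by fun_prop)
    (ae_of_all _ fun x b hb => by
      rw [norm_mul, norm_I, mul_one]
      exact norm_cexp_neg_mul_cosh_mul_sinh_le hc.le (by linarith [Real.pi_pos]) x
        (by simpa using (mem_ball_zero_iff.1 hb).le))
    ((Real.integrable_cosh_mul_exp_neg_mul_cosh hk).const_mul c)
    (ae_of_all _ fun x b _ =>
      ((hasDerivAt_exp_neg_mul_cosh c _).comp (b : ℂ)
        ((hasDerivAt_mul_const I).const_add (x : ℂ))).comp_ofReal)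
  rw [integral_mul_const, integral_cexp_neg_mul_cosh_mul_sinh_eq_zero hc hy, zero_mul] at hderiv
  exact hderiv.2

lemma integral_cexp_neg_mul_cosh_add_mul_I (hc : 0 < c) {y : ℝ} (hy : |y| < π / 2) :
    ∫ x : ℝ, cexp (-c * cosh (x + y * I)) = ∫ x : ℝ, Real.exp (-c * Real.cosh x) := by
  have hderiv (b : ℝ) (hb : b ∈ Ioo (-(π / 2)) (π / 2)) :=
    hasDerivAt_integral_cexp_neg_mul_cosh_add_mul_I hc (abs_lt.2 hb)
  have hconst := isOpen_Ioo.is_const_of_deriv_eq_zero isPreconnected_Ioo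
    (fun b hb => (hderiv b hb).differentiableAt.differentiableWithinAt)
    (fun b hb => (hderiv b hb).deriv) (abs_lt.1 hy)
    (show (0 : ℝ) ∈ Ioo (-(π / 2)) (π / 2) by simp [Real.pi_pos])
  rw [hconst, ← integral_complex_ofReal]
  push_cast
  simp

end ContourShift

open Real in
lemma integral_exp_neg_mul_cosh_mul_cos_mul_sinh {a : ℝ} (ha : 0 < a) (b : ℝ) :
    ∫ ξ in Ioi 0, exp (-a * cosh ξ) * cos (b * sinh ξ) =
      ∫ ξ in Ioi 0, exp (-√(a ^ 2 + b ^ 2) * cosh ξ) := by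
  set z : ℂ := a + b * Complex.I
  have harg : |z.arg| < π / 2 := Complex.abs_arg_lt_pi_div_two_iff.2 (Or.inl (by simpa [z]))
  have hpos : 0 < ‖z‖ := norm_pos_iff.2 fun h => by simp [z, Complex.ext_iff] at h; linarith
  have hre : ‖z‖ * cos z.arg = a := by simp [z]
  have him : ‖z‖ * sin z.arg = b := by simp [z]
  have heven (ξ : ℝ) :
      exp (-a * cosh |ξ|) * cos (b * sinh |ξ|) = exp (-a * cosh ξ) * cos (b * sinh ξ) := by
    rcases le_total 0 ξ with h | h
    · rw [abs_of_nonneg h]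
    · rw [abs_of_nonpos h, cosh_neg, sinh_neg, mul_neg, cos_neg]
  have hintegral := integral_re (integrable_cexp_neg_mul_cosh_add_mul_I hpos harg)
  simp only [RCLike.re_to_complex, re_cexp_neg_mul_cosh_add_mul_I, hre, him] at hintegral
  rw [← Complex.norm_add_mul_I, ← mul_right_inj' (two_ne_zero (α := ℝ)), ← integral_comp_abs,
    ← integral_comp_abs]
  simp only [heven]
  simp only [cosh_abs]
  rw [hintegral, integral_cexp_neg_mul_cosh_add_mul_I hpos harg, Complex.ofReal_re]

open Real in
lemma integral_Ioi_zero_eq_integral_comp_sinh_two_mul {E : Type*} [NormedAddCommGroup E]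
    [NormedSpace ℝ E] (f : ℝ → E) :
    ∫ t in Ioi 0, f t = ∫ ξ in Ioi 0, (cosh (2 * ξ) / 2) • f (sinh (2 * ξ) / 4) := by
  have hmono : StrictMono fun ξ : ℝ => sinh (2 * ξ) / 4 := fun x y h =>
    div_lt_div_of_pos_right (sinh_strictMono (by linarith)) (by norm_num)
  have himage : (fun ξ => sinh (2 * ξ) / 4) '' Ioi 0 = Ioi 0 := by
    refine Subset.antisymm ?_ fun t (ht : 0 < t) => ⟨arsinh (4 * t) / 2, ?_, ?_⟩
    · rintro _ ⟨ξ, hξ, rfl⟩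
      simpa using hmono hξ
    · simpa using ht
    · dsimp only
      rw [mul_div_cancel₀ _ two_ne_zero, sinh_arsinh]
      ring
  have hderiv (ξ : ℝ) : HasDerivAt (fun ξ => sinh (2 * ξ) / 4) (cosh (2 * ξ) / 2) ξ :=
    (((hasDerivAt_id' ξ).const_mul 2).sinh.div_const 4).congr_deriv (by ring)
  have h := integral_image_eq_integral_deriv_smul_of_monotoneOn (measurableSet_Ioi (a := 0))
    (fun ξ _ => (hderiv ξ).hasDerivWithinAt) (hmono.monotone.monotoneOn _) f
  rwa [himage] at h

lemma csqrt_one_add_sinh_two_mul_mul_I (ξ : ℝ) :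
    csqrt (1 + Real.sinh (2 * ξ) * Complex.I) = Real.cosh ξ + Real.sinh ξ * Complex.I := by
  have hsq : (1 + Real.sinh (2 * ξ) * Complex.I : ℂ) =
      (Real.cosh ξ + Real.sinh ξ * Complex.I) ^ 2 := by
    push_cast
    linear_combination Complex.I * Complex.sinh_two_mul (ξ : ℂ) -
      Complex.cosh_sq_sub_sinh_sq (ξ : ℂ) - Complex.sinh ξ ^ 2 * Complex.I_sq
  rw [csqrt, one_div, hsq, Complex.sq_cpow_two_inv (by simp [Real.cosh_pos])]

def besselKIntegrand (r1 r2 t : ℝ) : ℂ :=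
  (1/(Real.sqrt (1 + 16*t^2) : ℂ)) *
    Complex.exp (-(1/(Real.sqrt 2 : ℂ)) *
      (r1 * csqrt (1 + 4*Complex.I*t) + r2 * csqrt (1 - 4*Complex.I*t)))

open Real in
lemma cosh_two_mul_div_two_smul_besselKIntegrand (r1 r2 ξ : ℝ) :
    (cosh (2 * ξ) / 2) • besselKIntegrand r1 r2 (sinh (2 * ξ) / 4) =
      ((exp (-((r1 + r2) / √2) * cosh ξ) / 2 : ℝ) : ℂ) *
        Complex.exp (((r2 - r1) / √2 * sinh ξ : ℝ) * Complex.I) := by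
  have hsqrt : √(1 + 16 * (sinh (2 * ξ) / 4) ^ 2) = cosh (2 * ξ) := by
    rw [← sqrt_sq (cosh_pos (2 * ξ)).le, cosh_sq]
    ring_nf
  have hplus : csqrt (1 + 4 * Complex.I * ↑(sinh (2 * ξ) / 4)) = cosh ξ + sinh ξ * Complex.I := by
    rw [← csqrt_one_add_sinh_two_mul_mul_I]
    push_cast
    ring_nf
  have hminus : csqrt (1 - 4 * Complex.I * ↑(sinh (2 * ξ) / 4)) = cosh ξ - sinh ξ * Complex.I := by
    have h := csqrt_one_add_sinh_two_mul_mul_I (-ξ)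
    rw [mul_neg, sinh_neg, cosh_neg, sinh_neg] at h
    push_cast at h ⊢
    convert h using 2 <;> ring
  have hcosh : Complex.cosh (2 * ξ) ≠ 0 := by exact_mod_cast (cosh_pos (2 * ξ)).ne'

  rw [besselKIntegrand, hsqrt, hplus, hminus, Complex.real_smul]
  push_cast
  rw [div_mul_eq_mul_div (Complex.exp _), ← Complex.exp_add]
  field_simp
  congr 1
  ring

open Real in
lemma re_integral_besselKIntegrand {r1 r2 : ℝ} (h : 0 < r1 + r2) :
    (∫ t in Ioi 0, besselKIntegrand r1 r2 t).re =
      (∫ ξ in Ioi 0, exp (-((r1 + r2) / √2) * cosh ξ) * cos ((r2 - r1) / √2 * sinh ξ)) / 2 := by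
  have hint : Integrable fun ξ : ℝ => ((exp (-((r1 + r2) / √2) * cosh ξ) / 2 : ℝ) : ℂ) *
      Complex.exp (((r2 - r1) / √2 * sinh ξ : ℝ) * Complex.I) :=
    ((integrable_exp_neg_mul_cosh (k := (r1 + r2) / √2) (by positivity)).div_const 2).mono'
      (by fun_prop) (ae_of_all _ fun ξ => by
        rw [norm_mul, Complex.norm_exp_ofReal_mul_I, mul_one, Complex.norm_real,
          norm_of_nonneg (by positivity)])
  have hintegral := integral_re hint.integrableOn (μ := volume.restrict (Ioi 0))
  simp only [RCLike.re_to_complex, Complex.re_ofReal_mul, Complex.exp_ofReal_mul_I_re]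
    at hintegral
  rw [integral_Ioi_zero_eq_integral_comp_sinh_two_mul]
  simp_rw [cosh_two_mul_div_two_smul_besselKIntegrand]
  rw [← hintegral, ← integral_div]
  congr 1 with ξ
  ring

theorem stmt3 (r1 r2 : ℝ) (hr1 : 0 ≤ r1) (hr2 : 0 ≤ r2) (hne : (r1, r2) ≠ (0, 0)) :
    2 * (∫ t in Set.Ioi (0:ℝ),
        (1/(Real.sqrt (1 + 16*t^2) : ℂ)) *
          Complex.exp (-(1/(Real.sqrt 2 : ℂ)) *
            (r1 * csqrt (1 + 4*Complex.I*t) + r2 * csqrt (1 - 4*Complex.I*t)))).re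
      = K0 (Real.sqrt (r1^2 + r2^2)) := by
  have hsum : 0 < r1 + r2 := by
    by_contra! h
    exact hne (by simp only [Prod.mk.injEq]; constructor <;> linarith)
  have hnorm : √(((r1 + r2) / √2) ^ 2 + ((r2 - r1) / √2) ^ 2) = √(r1 ^ 2 + r2 ^ 2) := by
    rw [div_pow, div_pow, Real.sq_sqrt zero_le_two]
    ring_nf
  change 2 * (∫ t in Ioi 0, besselKIntegrand r1 r2 t).re = _
  rw [re_integral_besselKIntegrand hsum, mul_div_cancel₀ _ two_ne_zero,
    integral_exp_neg_mul_cosh_mul_cos_mul_sinh (by positivity), hnorm,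
    K0_eq_integral_exp_neg_mul_cosh]

end
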